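/- arXiv:0905.2899 — 2 statements merged into one kernel-verified Lean document; each statement's English description precedes it below -/
import Mathlib

section
/- For all positive integers n ≥ k ≥ 1, writing (−1)^{n−k}·js_n^k(z) = b_{n,k}^{(0)} + b_{n,k}^{(1)} z + … + b_{n,k}^{(n−k)} z^{n−k}, the leading coefficient b_{n,k}^{(n−k)} equals the unsigned Stirling number of the first kind |s(n,k)|, and the constant coefficient b_{n,k}^{(0)} equals |u(n,k)|, the absolute value of the central factorial number of the first kind of even indices. -/
open Polynomial

/-- The Jacobi-Stirling numbers of the first kind `js n k` as polynomials in `z`. -/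
noncomputable def js : ℕ → ℕ → Polynomial ℤ
  | 0, 0 => 1
  | 0, _ + 1 => 0
  | _ + 1, 0 => 0
  | n + 1, k + 1 => js n k - C (n : ℤ) * (C (n : ℤ) + X) * js n (k + 1)

/-- The central factorial numbers of the first kind of even indices `u n k = t (2n) (2k)`. -/
def u : ℕ → ℕ → ℤ
  | 0, 0 => 1
  | 0, _ + 1 => 0
  | _ + 1, 0 => 0
  | n + 1, k + 1 => u n k - (n : ℤ) ^ 2 * u n (k + 1)

/-- The set of cyclic minima of a permutation of `{1, …, n}` (modelled on `Fin n`);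
its cardinality is the number of cycles of the permutation. -/
def cycleMins {n : ℕ} (σ : Equiv.Perm (Fin n)) : Set (Fin n) :=
  {j | ∀ l : ℕ, j ≤ (σ ^ l) j}

open Equiv Equiv.Perm

/-- Unsigned Stirling numbers of the first kind. -/
def St : ℕ → ℕ → ℕ
  | 0, 0 => 1
  | 0, _ + 1 => 0
  | _ + 1, 0 => 0
  | n + 1, k + 1 => St n k + n * St n (k + 1)

lemma js_zero_right (n : ℕ) (hn : 0 < n) : js n 0 = 0 := by
  cases n with
  | zero => omega
  | succ m => rfl

lemma js_eq_zero (n k : ℕ) (h : n < k) : js n k = 0 := by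
  induction n generalizing k with
  | zero => cases k with
    | zero => omega
    | succ m => rfl
  | succ m ih =>
    cases k with
    | zero => omega
    | succ l =>
      show js m l - _ * js m (l+1) = 0
      rw [ih l (by omega), ih (l+1) (by omega), mul_zero, sub_zero]

lemma St_eq_zero (n k : ℕ) (h : n < k) : St n k = 0 := by
  induction n generalizing k with
  | zero => cases k with
    | zero => omega
    | succ m => rfl
  | succ m ih =>
    cases k with
    | zero => omega
    | succ l =>
      show St m l + m * St m (l+1) = 0
      rw [ih l (by omega), ih (l+1) (by omega), mul_zero]
      rfl

lemma u_eq_zero (n k : ℕ) (h : n < k) : u n k = 0 := by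
  induction n generalizing k with
  | zero => cases k with
    | zero => omega
    | succ m => rfl
  | succ m ih =>
    cases k with
    | zero => omega
    | succ l =>
      show u m l - _ * u m (l+1) = 0
      rw [ih l (by omega), ih (l+1) (by omega), mul_zero, sub_zero]

lemma js_degree (n k : ℕ) : (js n k).degree ≤ (n - k : ℕ) := by
  induction n generalizing k with
  | zero =>
    cases k with
    | zero => show (1 : Polynomial ℤ).degree ≤ _; simp [degree_one]
    | succ m => show (0 : Polynomial ℤ).degree ≤ _; simp
  | succ m ih =>
    cases k with
    | zero => show (0 : Polynomial ℤ).degree ≤ _; simp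
    | succ l =>
      show (js m l - C (m : ℤ) * (C (m : ℤ) + X) * js m (l + 1)).degree ≤ _
      rw [show m + 1 - (l + 1) = m - l from by omega]
      rcases lt_or_ge m (l+1) with h | h
      · rw [js_eq_zero m (l+1) h, mul_zero, sub_zero]
        exact ih l
      · refine le_trans (degree_sub_le _ _) (max_le (ih l) ?_)
        refine le_trans (degree_mul_le _ _) ?_
        have h1 : (C (m : ℤ) * (C (m : ℤ) + X)).degree ≤ 1 := by
          refine le_trans (degree_mul_le _ _) ?_
          have h0 : (C (m : ℤ)).degree ≤ 0 := degree_C_le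
          have h2 : (C (m : ℤ) + X).degree ≤ 1 := by
            refine le_trans (degree_add_le _ _) (max_le (le_trans degree_C_le (by norm_num)) ?_)
            simp [degree_X_le]
          calc (C (m : ℤ)).degree + (C (m : ℤ) + X).degree ≤ 0 + 1 := add_le_add h0 h2
            _ = 1 := by norm_num
        refine le_trans (add_le_add h1 (ih (l+1))) ?_
        rw [show ((m - l) : ℕ) = ((m - (l+1)) : ℕ) + 1 by omega]
        rw [Nat.cast_add, Nat.cast_one]
        rw [add_comm (1 : WithBot ℕ)]

lemma js_coeff_high (n k i : ℕ) (h : n - k < i) : (js n k).coeff i = 0 := by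
  apply coeff_eq_zero_of_degree_lt
  exact lt_of_le_of_lt (js_degree n k) (by exact_mod_cast Nat.cast_lt.mpr h)

lemma js_coeff_top (n k : ℕ) : (js n k).coeff (n - k) = (-1 : ℤ) ^ (n - k) * St n k := by
  induction n generalizing k with
  | zero =>
    cases k with
    | zero => show (1 : Polynomial ℤ).coeff 0 = _; simp [St]
    | succ m => show (0 : Polynomial ℤ).coeff _ = _; simp [St_eq_zero 0 (m+1) (by omega)]
  | succ m ih =>
    cases k with
    | zero =>
      show (0 : Polynomial ℤ).coeff _ = _
      rw [coeff_zero]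
      have : St (m+1) 0 = 0 := rfl
      simp [this]
    | succ l =>
      show (js m l - C (m : ℤ) * (C (m : ℤ) + X) * js m (l + 1)).coeff _ = _
      have hd : (m + 1 - (l + 1)) = m - l := by omega
      rw [hd, coeff_sub]
      have expand : C (m : ℤ) * (C (m : ℤ) + X) * js m (l+1)
          = C ((m : ℤ)^2) * js m (l+1) + C (m : ℤ) * (X * js m (l+1)) := by
        ring_nf
        rw [C_pow]
        ring
      rw [expand, coeff_add, coeff_C_mul, coeff_C_mul]
      rcases lt_or_ge l m with h | h
      · have h1 : (js m (l+1)).coeff (m - l) = 0 := js_coeff_high m (l+1) (m-l) (by omega)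
        have h2 : (X * js m (l+1)).coeff (m - l) = (js m (l+1)).coeff (m - (l+1)) := by
          rw [show m - l = (m - (l+1)) + 1 by omega, coeff_X_mul]
        rw [h1, h2, ih l, ih (l+1)]
        show _ = (-1:ℤ)^(m-l) * (St m l + m * St m (l+1) : ℕ)
        rw [show m - l = (m - (l+1)) + 1 by omega]
        push_cast
        ring
      · -- l ≥ m : js m (l+1) = 0, St (m+1) (l+1) = St m l
        rw [js_eq_zero m (l+1) (by omega)]
        simp only [coeff_zero, mul_zero, coeff_zero]
        rw [ih l]
        show _ = (-1:ℤ)^(m-l) * (St m l + m * St m (l+1) : ℕ)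
        rw [St_eq_zero m (l+1) (by omega)]
        push_cast
        ring

lemma js_coeff_zero (n k : ℕ) : (js n k).coeff 0 = u n k := by
  induction n generalizing k with
  | zero =>
    cases k with
    | zero => show (1 : Polynomial ℤ).coeff 0 = _; simp [u]
    | succ m => show (0 : Polynomial ℤ).coeff _ = _; simp [u]
  | succ m ih =>
    cases k with
    | zero => show (0 : Polynomial ℤ).coeff _ = _; simp [u]
    | succ l =>
      show (js m l - C (m : ℤ) * (C (m : ℤ) + X) * js m (l + 1)).coeff 0 = u (m+1) (l+1)
      rw [coeff_sub, mul_coeff_zero, mul_coeff_zero, coeff_C, coeff_add, coeff_C, coeff_X_zero]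
      rw [ih l, ih (l+1)]
      show _ = u m l - (m:ℤ)^2 * u m (l+1)
      simp only [↓reduceIte, add_zero]
      ring

lemma u_sign (n k : ℕ) : 0 ≤ (-1 : ℤ) ^ (n - k) * u n k := by
  induction n generalizing k with
  | zero =>
    cases k with
    | zero => simp [u]
    | succ m => simp [u]
  | succ m ih =>
    cases k with
    | zero => show 0 ≤ _ * u (m+1) 0; simp [u]
    | succ l =>
      rw [show u (m+1) (l+1) = u m l - (m:ℤ)^2 * u m (l+1) from rfl]
      rw [show m + 1 - (l + 1) = m - l by omega]
      rcases lt_or_ge l m with h | h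
      · have h1 := ih l
        have h2 := ih (l+1)
        rw [show m - l = (m - (l+1)) + 1 by omega] at h1 ⊢
        rw [pow_succ] at h1 ⊢
        nlinarith [mul_nonneg (sq_nonneg (m:ℤ)) h2]
      · rw [u_eq_zero m (l+1) (by omega), show m - l = 0 by omega]
        have := ih l
        rw [show m - l = 0 by omega] at this
        simpa using this


lemma mem_cycleMins_iff {n : ℕ} (σ : Perm (Fin n)) (j : Fin n) :
    j ∈ cycleMins σ ↔ ∀ i, σ.SameCycle j i → j ≤ i := by
  constructor
  · intro h i hi
    obtain ⟨l, -, rfl⟩ := hi.exists_pow_eq'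
    exact h l
  · intro h l
    exact h _ ⟨(l : ℤ), by rw [zpow_natCast]⟩

lemma existsUnique_cycleMin {n : ℕ} (σ : Perm (Fin n)) (x : Fin n) :
    ∃! j, σ.SameCycle x j ∧ j ∈ cycleMins σ := by
  classical
  set s : Finset (Fin n) := Finset.univ.filter (σ.SameCycle x) with hs
  have hxs : x ∈ s := by simp [hs, SameCycle.refl]
  have hne : s.Nonempty := ⟨x, hxs⟩
  refine ⟨s.min' hne, ⟨?_, ?_⟩, ?_⟩
  · have := s.min'_mem hne
    simpa [hs] using this
  · rw [mem_cycleMins_iff]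
    intro i hi
    have hxi : σ.SameCycle x i := by
      have hxm : σ.SameCycle x (s.min' hne) := by simpa [hs] using s.min'_mem hne
      exact hxm.trans hi
    exact s.min'_le i (by simp [hs, hxi])
  · rintro j ⟨hj1, hj2⟩
    have h1 : j ≤ s.min' hne := by
      rw [mem_cycleMins_iff] at hj2
      exact hj2 _ (hj1.symm.trans (by simpa [hs] using s.min'_mem hne))
    have h2 : s.min' hne ≤ j := s.min'_le j (by simp [hs, hj1])
    exact le_antisymm h1 h2

lemma zero_mem_cycleMins {n : ℕ} (σ : Perm (Fin (n + 1))) : 0 ∈ cycleMins σ :=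
  fun _ => Fin.zero_le _

/-! ### Case p = 0 -/

lemma decomp_zero_pow_succ {n : ℕ} (e : Perm (Fin n)) (l : ℕ) (x : Fin n) :
    ((Equiv.Perm.decomposeFin.symm (0, e) : Perm (Fin (n+1))) ^ l) x.succ = ((e ^ l) x).succ := by
  induction l generalizing x with
  | zero => simp
  | succ l ih =>
    rw [pow_succ, Perm.mul_apply, pow_succ, Perm.mul_apply]
    rw [Equiv.Perm.decomposeFin_symm_apply_succ, Equiv.swap_self]
    exact ih (e x)

lemma cycleMins_decomp_zero {n : ℕ} (e : Perm (Fin n)) :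
    cycleMins (Equiv.Perm.decomposeFin.symm (0, e)) = insert 0 (Fin.succ '' cycleMins e) := by
  ext i
  induction i using Fin.cases with
  | zero =>
    simp only [Set.mem_insert_iff, eq_self_iff_true, true_or, iff_true]
    exact zero_mem_cycleMins _
  | succ x =>
    simp only [Set.mem_insert_iff, Set.mem_image]
    constructor
    · intro h
      refine Or.inr ⟨x, fun l => ?_, rfl⟩
      have := h l
      rw [decomp_zero_pow_succ] at this
      exact Fin.succ_le_succ_iff.mp this
    · rintro (h | ⟨y, hy, hyx⟩)
      · exact absurd h (Fin.succ_ne_zero x)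
      · intro l
        obtain rfl : y = x := Fin.succ_injective _ hyx
        rw [decomp_zero_pow_succ]
        exact Fin.succ_le_succ_iff.mpr (hy l)

/-! ### Case p = q.succ -/

section succCase

variable {n : ℕ} (e : Perm (Fin n)) (q : Fin n)

local notation "τ" => (Equiv.Perm.decomposeFin.symm (q.succ, e) : Perm (Fin (n+1)))

lemma tau_zero : τ 0 = q.succ := Equiv.Perm.decomposeFin_symm_apply_zero _ _

lemma tau_succ (x : Fin n) : τ x.succ = if e x = q then 0 else (e x).succ := by
  rw [Equiv.Perm.decomposeFin_symm_apply_succ]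
  by_cases h : e x = q
  · rw [h, if_pos rfl, Equiv.swap_apply_right]
  · rw [if_neg h, Equiv.swap_apply_of_ne_of_ne (Fin.succ_ne_zero _)
      (fun hc => h (Fin.succ_injective _ hc))]

lemma sc_tau_zero_qsucc : SameCycle τ 0 q.succ := ⟨1, by simp [tau_zero]⟩

lemma sc_tau_step (x : Fin n) : SameCycle τ x.succ (e x).succ := by
  by_cases h : e x = q
  · have h1 : SameCycle τ x.succ 0 := ⟨1, by rw [zpow_one, tau_succ, if_pos h]⟩
    refine h1.trans ?_
    rw [h]
    exact sc_tau_zero_qsucc e q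
  · exact ⟨1, by rw [zpow_one, tau_succ, if_neg h]⟩

lemma sc_tau_of_sc (x y : Fin n) (h : SameCycle e x y) : SameCycle τ x.succ y.succ := by
  obtain ⟨l, -, rfl⟩ := h.exists_pow_eq'
  clear h
  induction l generalizing x with
  | zero => rw [pow_zero, Perm.one_apply]
  | succ l ih =>
    have h1 : SameCycle τ x.succ (e x).succ := sc_tau_step e q x
    refine h1.trans ?_
    have := ih (e x)
    rw [pow_succ, Perm.mul_apply]
    exact this

lemma sc_tau_zero_of_sc (x : Fin n) (h : SameCycle e x q) : SameCycle τ x.succ 0 := by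
  exact (sc_tau_of_sc e q x q h).trans (sc_tau_zero_qsucc e q).symm

lemma sc_of_tau_pow : ∀ l : ℕ, ∀ x y : Fin n, ((τ) ^ l) x.succ = y.succ → SameCycle e x y := by
  intro l
  induction l using Nat.strong_induction_on with
  | _ l IH =>
    intro x y h
    match l, h with
    | 0, h =>
      obtain rfl : x = y := Fin.succ_injective _ h
      exact SameCycle.refl _ _
    | (l+1), h =>
      rw [pow_succ, Perm.mul_apply] at h
      by_cases hq : e x = q
      · rw [tau_succ, if_pos hq] at h
        match l, h with
        | 0, h => exact absurd h (Fin.succ_ne_zero y).symm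
        | (l'+1), h =>
          rw [pow_succ, Perm.mul_apply, tau_zero] at h
          have h2 : SameCycle e q y := IH l' (by omega) q y h
          exact (show SameCycle e x q from ⟨1, by simp [hq]⟩).trans h2
      · rw [tau_succ, if_neg hq] at h
        have h2 : SameCycle e (e x) y := IH l (by omega) (e x) y h
        exact (show SameCycle e x (e x) from ⟨1, by simp⟩).trans h2

lemma sc_q_of_tau_pow_zero : ∀ l : ℕ, ∀ x : Fin n, ((τ) ^ l) x.succ = 0 → SameCycle e x q := by
  intro l
  induction l with
  | zero => intro x h; exact absurd h (Fin.succ_ne_zero x)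
  | succ l ih =>
    intro x h
    rw [pow_succ, Perm.mul_apply] at h
    by_cases hq : e x = q
    · exact ⟨1, by simp [hq]⟩
    · rw [tau_succ, if_neg hq] at h
      exact (show SameCycle e x (e x) from ⟨1, by simp⟩).trans (ih (e x) h)

lemma succ_mem_cycleMins_tau_iff (x : Fin n) :
    x.succ ∈ cycleMins τ ↔ x ∈ cycleMins e ∧ ¬ SameCycle e x q := by
  rw [mem_cycleMins_iff]
  constructor
  · intro h
    constructor
    · rw [mem_cycleMins_iff]
      intro i hi
      exact Fin.succ_le_succ_iff.mp (h i.succ (sc_tau_of_sc e q x i hi))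
    · intro hq
      have := h 0 (sc_tau_zero_of_sc e q x hq)
      exact Fin.succ_ne_zero x (Fin.le_zero_iff.mp this)
  · rintro ⟨hm, hq⟩ i hi
    induction i using Fin.cases with
    | zero =>
      obtain ⟨l, -, hl⟩ := hi.exists_pow_eq'
      exact absurd (sc_q_of_tau_pow_zero e q l x hl) hq
    | succ j =>
      obtain ⟨l, -, hl⟩ := hi.exists_pow_eq'
      have := sc_of_tau_pow e q l x j hl
      rw [mem_cycleMins_iff] at hm
      exact Fin.succ_le_succ_iff.mpr (hm j this)

end succCase

lemma cycleMins_decomp_succ {n : ℕ} (e : Perm (Fin n)) (q : Fin n) :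
    cycleMins (Equiv.Perm.decomposeFin.symm (q.succ, e)) =
      insert 0 (Fin.succ '' (cycleMins e ∩ {x | ¬ SameCycle e x q})) := by
  ext i
  induction i using Fin.cases with
  | zero =>
    simp only [Set.mem_insert_iff, eq_self_iff_true, true_or, iff_true]
    exact zero_mem_cycleMins _
  | succ x =>
    rw [succ_mem_cycleMins_tau_iff]
    simp only [Set.mem_insert_iff, Set.mem_image, Set.mem_inter_iff, Set.mem_setOf_eq]
    constructor
    · rintro ⟨h1, h2⟩
      exact Or.inr ⟨x, ⟨h1, h2⟩, rfl⟩
    · rintro (h | ⟨y, hy, hyx⟩)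
      · exact absurd h (Fin.succ_ne_zero x)
      · obtain rfl : y = x := Fin.succ_injective _ hyx
        exact hy

lemma cm_decomp {n : ℕ} (p : Fin (n + 1)) (e : Perm (Fin n)) :
    Nat.card (cycleMins (Equiv.Perm.decomposeFin.symm (p, e))) =
      Nat.card (cycleMins e) + if p = 0 then 1 else 0 := by
  rw [Nat.card_coe_set_eq, Nat.card_coe_set_eq]
  induction p using Fin.cases with
  | zero =>
    rw [if_pos rfl, cycleMins_decomp_zero]
    rw [Set.ncard_insert_of_notMem (by
        rintro ⟨y, -, hy⟩
        exact Fin.succ_ne_zero y hy) ((cycleMins e).toFinite.image _)]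
    rw [Set.ncard_image_of_injective _ (Fin.succ_injective n)]
  | succ q =>
    rw [if_neg (Fin.succ_ne_zero q), add_zero, cycleMins_decomp_succ]
    obtain ⟨m, ⟨hm1, hm2⟩, hm3⟩ := existsUnique_cycleMin e q
    have hset : cycleMins e ∩ {x | ¬ SameCycle e x q} = cycleMins e \ {m} := by
      ext x
      simp only [Set.mem_inter_iff, Set.mem_setOf_eq, Set.mem_diff, Set.mem_singleton_iff]
      constructor
      · rintro ⟨h1, h2⟩
        refine ⟨h1, fun hxm => h2 ?_⟩
        subst hxm
        exact hm1.symm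
      · rintro ⟨h1, h2⟩
        refine ⟨h1, fun hsc => h2 (hm3 x ⟨hsc.symm, h1⟩)⟩
    rw [hset]
    rw [Set.ncard_insert_of_notMem (by
        rintro ⟨y, -, hy⟩
        exact Fin.succ_ne_zero y hy) (((cycleMins e) \ {m}).toFinite.image _)]
    rw [Set.ncard_image_of_injective _ (Fin.succ_injective n)]
    rw [Set.ncard_diff_singleton_add_one hm2 (cycleMins e).toFinite]

lemma cm_pos {n : ℕ} (σ : Perm (Fin (n + 1))) : 0 < Nat.card (cycleMins σ) := by
  rw [Nat.card_coe_set_eq]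
  rw [Set.ncard_pos (cycleMins σ).toFinite]
  exact ⟨0, zero_mem_cycleMins σ⟩

lemma count_zero_zero : Nat.card {σ : Perm (Fin 0) // Nat.card (cycleMins σ) = 0} = 1 := by
  have h : ∀ σ : Perm (Fin 0), Nat.card (cycleMins σ) = 0 := by
    intro σ
    have : IsEmpty (cycleMins σ) := ⟨fun ⟨x, _⟩ => x.elim0⟩
    exact Nat.card_of_isEmpty
  rw [Nat.card_congr (Equiv.subtypeUnivEquiv h)]
  rw [Nat.card_eq_fintype_card]
  simp

lemma count_zero_succ (k : ℕ) :
    Nat.card {σ : Perm (Fin 0) // Nat.card (cycleMins σ) = k + 1} = 0 := by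
  have : IsEmpty {σ : Perm (Fin 0) // Nat.card (cycleMins σ) = k + 1} := by
    refine ⟨fun ⟨σ, h⟩ => ?_⟩
    have he : IsEmpty (cycleMins σ) := ⟨fun ⟨x, _⟩ => x.elim0⟩
    rw [Nat.card_of_isEmpty] at h
    omega
  exact Nat.card_of_isEmpty

lemma count_succ_zero (n : ℕ) :
    Nat.card {σ : Perm (Fin (n + 1)) // Nat.card (cycleMins σ) = 0} = 0 := by
  have : IsEmpty {σ : Perm (Fin (n + 1)) // Nat.card (cycleMins σ) = 0} := by
    refine ⟨fun ⟨σ, h⟩ => ?_⟩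
    have := cm_pos σ
    omega
  exact Nat.card_of_isEmpty

lemma count_rec (n k : ℕ) :
    Nat.card {σ : Perm (Fin (n + 1)) // Nat.card (cycleMins σ) = k + 1} =
      Nat.card {e : Perm (Fin n) // Nat.card (cycleMins e) = k} +
      n * Nat.card {e : Perm (Fin n) // Nat.card (cycleMins e) = k + 1} := by
  classical
  have E1 : {σ : Perm (Fin (n + 1)) // Nat.card (cycleMins σ) = k + 1} ≃
      {pe : Fin (n + 1) × Perm (Fin n) //
        Nat.card (cycleMins pe.2) + (if pe.1 = 0 then 1 else 0) = k + 1} := by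
    refine Equiv.subtypeEquiv Equiv.Perm.decomposeFin (fun σ => ?_)
    rw [← cm_decomp (Equiv.Perm.decomposeFin σ).1 (Equiv.Perm.decomposeFin σ).2]
    rw [Prod.mk.eta, Equiv.symm_apply_apply]
  have E2 : {pe : Fin (n + 1) × Perm (Fin n) //
        Nat.card (cycleMins pe.2) + (if pe.1 = 0 then 1 else 0) = k + 1} ≃
      Σ p : Fin (n + 1), {e : Perm (Fin n) //
        Nat.card (cycleMins e) + (if p = 0 then 1 else 0) = k + 1} :=
    Equiv.subtypeProdEquivSigmaSubtype
      (fun (p : Fin (n + 1)) (e : Perm (Fin n)) =>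
        Nat.card (cycleMins e) + (if p = 0 then 1 else 0) = k + 1)
  rw [Nat.card_congr (E1.trans E2), Nat.card_eq_fintype_card, Fintype.card_sigma,
    Fin.sum_univ_succ]
  congr 1
  · rw [← Nat.card_eq_fintype_card]
    refine Nat.card_congr (Equiv.subtypeEquivRight (fun e => ?_))
    simp
  · have hterm : ∀ q : Fin n,
        Fintype.card {e : Perm (Fin n) //
          Nat.card (cycleMins e) + (if (q.succ : Fin (n+1)) = 0 then 1 else 0) = k + 1} =
        Nat.card {e : Perm (Fin n) // Nat.card (cycleMins e) = k + 1} := by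
      intro q
      rw [← Nat.card_eq_fintype_card]
      refine Nat.card_congr (Equiv.subtypeEquivRight (fun e => ?_))
      simp [Fin.succ_ne_zero q]
    rw [Finset.sum_congr rfl (fun q _ => hterm q), Finset.sum_const, Finset.card_univ,
      Fintype.card_fin, smul_eq_mul]

lemma count_eq_St : ∀ n k : ℕ,
    Nat.card {σ : Perm (Fin n) // Nat.card (cycleMins σ) = k} = St n k := by
  intro n
  induction n with
  | zero =>
    intro k
    cases k with
    | zero => rw [count_zero_zero]; rfl
    | succ l => rw [count_zero_succ]; rfl
  | succ m ih =>
    intro k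
    cases k with
    | zero => rw [count_succ_zero]; rfl
    | succ l =>
      rw [count_rec, ih l, ih (l + 1)]
      rfl


/-- For `n ≥ k ≥ 1`, the leading coefficient of `(-1)^(n-k) * js n k` is the unsigned
Stirling number of the first kind `|s(n,k)|` (the number of permutations of `{1,…,n}`
with `k` cycles) and its constant coefficient is `|u n k|`. -/
theorem stmt3 (n k : ℕ) (hk : 1 ≤ k) (hkn : k ≤ n) :
    ((-1 : Polynomial ℤ) ^ (n - k) * js n k).coeff (n - k) =
      (Nat.card {σ : Equiv.Perm (Fin n) // Nat.card (cycleMins σ) = k} : ℤ) ∧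
    ((-1 : Polynomial ℤ) ^ (n - k) * js n k).coeff 0 = ((u n k).natAbs : ℤ) := by
  have hC : ((-1 : Polynomial ℤ) ^ (n - k)) = C ((-1 : ℤ) ^ (n - k)) := by
    rw [map_pow, map_neg, map_one]
  constructor
  · rw [hC, coeff_C_mul, js_coeff_top, count_eq_St, ← mul_assoc, ← mul_pow]
    norm_num
  · rw [hC, coeff_C_mul, js_coeff_zero]
    have h1 := u_sign n k
    have h2 : |u n k| = (-1 : ℤ) ^ (n - k) * u n k := by
      rw [show |u n k| = |(-1 : ℤ) ^ (n - k) * u n k| by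
        rw [abs_mul, abs_pow, abs_neg, abs_one, one_pow, one_mul]]
      exact abs_of_nonneg h1
    rw [Int.abs_eq_natAbs] at h2
    exact h2.symm
end

section
/- For any positive integers n ≥ k ≥ 1, the absolute value of the Legendre-Stirling number of the first kind |ls(n,k)| = |js_n^k(1)| equals the number of ordered pairs (σ, τ) where σ is a permutation of [n]_0 = {0,1,…,n} with k cycles, τ is a permutation of [n] = {1,…,n} with k cycles, 1 belongs to the orbit of 0 under σ, and min(σ) = min(τ). -/
open Polynomial

/-- For a permutation `σ` of `[n]₀ = {0, 1, …, n}` (modelled on `Fin (n+1)`), the set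
`min σ` of cyclic minima: those `j ∈ [n]` with `j = min (Orb_σ(j) ∩ [n])`. -/
def posMins {n : ℕ} (σ : Equiv.Perm (Fin (n + 1))) : Set (Fin (n + 1)) :=
  {j | j ≠ 0 ∧ ∀ l : ℕ, (σ ^ l) j ≠ 0 → j ≤ (σ ^ l) j}

/-- The set of minima of all orbits of a permutation of `[n]₀` (modelled on `Fin (n+1)`);
its cardinality is the number of cycles of the permutation. -/
def allMins {n : ℕ} (σ : Equiv.Perm (Fin (n + 1))) : Set (Fin (n + 1)) :=
  {j | ∀ l : ℕ, j ≤ (σ ^ l) j}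

open Equiv Fin

def lsc : ℕ → ℕ → ℕ
  | 0, 0 => 1
  | 0, _ + 1 => 0
  | _ + 1, 0 => 0
  | n + 1, k + 1 => lsc n k + n * (n + 1) * lsc n (k + 1)

lemma lsc_of_gt : ∀ n k, n < k → lsc n k = 0 := by
  intro n
  induction n with
  | zero => intro k hk; match k, hk with | k+1, _ => rfl
  | succ n ih =>
    intro k hk
    match k, hk with
    | k+1, hk =>
      show lsc n k + n * (n+1) * lsc n (k+1) = 0
      rw [ih k (by omega), ih (k+1) (by omega)]
      ring

lemma lsc_diag : ∀ n, lsc n n = 1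
  | 0 => rfl
  | n + 1 => by
    show lsc n n + n * (n+1) * lsc n (n+1) = 1
    simp [lsc_diag n, lsc_of_gt n (n+1) (by omega)]

lemma js_of_gt : ∀ n k, n < k → js n k = 0 := by
  intro n
  induction n with
  | zero => intro k hk; match k, hk with | k+1, _ => rfl
  | succ n ih =>
    intro k hk
    match k, hk with
    | k+1, hk =>
      show js n k - C (n : ℤ) * (C (n : ℤ) + X) * js n (k + 1) = 0
      rw [ih k (by omega), ih (k+1) (by omega)]
      ring

lemma js_eval : ∀ n k, (js n k).eval 1 = (-1 : ℤ)^(n - k) * lsc n k := by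
  intro n
  induction n with
  | zero =>
    intro k
    match k with
    | 0 => simp [js, lsc]
    | k+1 => simp [js, lsc]
  | succ n ih =>
    intro k
    match k with
    | 0 => show (0 : Polynomial ℤ).eval 1 = _ ; simp [show lsc (n+1) 0 = 0 from rfl]
    | k+1 =>
      show (js n k - C (n : ℤ) * (C (n : ℤ) + X) * js n (k + 1)).eval 1 = _
      rw [show (n:ℕ) + 1 - (k+1) = n - k from by omega]
      simp only [eval_sub, eval_mul, eval_add, eval_C, eval_X, ih]
      show ((-1:ℤ))^(n-k) * lsc n k - (n:ℤ) * ((n:ℤ)+1) * ((-1)^(n - (k+1)) * lsc n (k+1)) = _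
      rcases lt_or_ge k n with h | h
      · obtain ⟨d, hd⟩ : ∃ d, n - k = d + 1 := ⟨n - k - 1, by omega⟩
        have hd2 : n - (k+1) = d := by omega
        rw [hd, hd2, show lsc (n+1) (k+1) = lsc n k + n * (n+1) * lsc n (k+1) from rfl]
        push_cast
        ring
      · have h1 : lsc n (k+1) = 0 := lsc_of_gt _ _ (by omega)
        have h2 : js n (k+1) = 0 := js_of_gt _ _ (by omega)
        rw [show lsc (n+1) (k+1) = lsc n k + n * (n+1) * lsc n (k+1) from rfl, h1]
        simp

open Equiv Fin

def dL (m : ℕ) : Equiv.Perm (Fin (m + 1)) ≃ Fin (m + 1) × Equiv.Perm (Fin m) :=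
  ((Equiv.permCongr finSuccEquivLast).trans Equiv.Perm.decomposeOption).trans
    (Equiv.prodCongr finSuccEquivLast.symm (Equiv.refl _))

lemma dL_symm_apply {m : ℕ} (a : Fin (m + 1)) (p : Equiv.Perm (Fin m)) (y : Fin (m + 1)) :
    (dL m).symm (a, p) y =
      finSuccEquivLast.symm ((swap none (finSuccEquivLast a)) ((Equiv.optionCongr p) (finSuccEquivLast y))) := by
  simp [dL, Equiv.permCongr, Equiv.Perm.decomposeOption]

lemma dL_symm_apply_last {m : ℕ} (a : Fin (m + 1)) (p : Equiv.Perm (Fin m)) :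
    (dL m).symm (a, p) (last m) = a := by
  rw [dL_symm_apply]
  simp

lemma dL_symm_apply_castSucc {m : ℕ} (a : Fin (m + 1)) (p : Equiv.Perm (Fin m)) (i : Fin m) :
    (dL m).symm (a, p) i.castSucc =
      if (p i).castSucc = a then last m else (p i).castSucc := by
  rw [dL_symm_apply]
  rcases Fin.eq_castSucc_or_eq_last a with ⟨a₀, rfl⟩ | rfl
  · by_cases hp : p i = a₀
    · simp [hp, swap_apply_left]
    · have h1 : (some (p i) : Option (Fin m)) ≠ none := by simp
      have h2 : (some (p i) : Option (Fin m)) ≠ some a₀ := by simpa using hp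
      have h3 : (p i).castSucc ≠ a₀.castSucc := fun h => hp (Fin.castSucc_injective _ h)
      simp [swap_apply_of_ne_of_ne h1 h2, h3]
  · have : (p i).castSucc ≠ last m := (Fin.castSucc_lt_last _).ne
    simp [this]

def Splice {m : ℕ} (σ : Equiv.Perm (Fin (m + 2))) (σ' : Equiv.Perm (Fin (m + 1))) : Prop :=
  ∀ i : Fin (m + 1), σ i.castSucc =
    if (σ' i).castSucc = σ (last (m + 1)) then last (m + 1) else (σ' i).castSucc

lemma splice_dL {m : ℕ} (a : Fin (m + 2)) (p : Equiv.Perm (Fin (m + 1))) :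
    Splice ((dL (m + 1)).symm (a, p)) p := by
  intro i
  rw [dL_symm_apply_castSucc, dL_symm_apply_last]

namespace Splice

variable {m : ℕ} {σ : Equiv.Perm (Fin (m + 2))} {σ' : Equiv.Perm (Fin (m + 1))}

lemma dir1 (h : Splice σ σ') (l : ℕ) (i : Fin (m + 1)) :
    ∃ l', (σ ^ l') i.castSucc = ((σ' ^ l) i).castSucc := by
  induction l with
  | zero => exact ⟨0, rfl⟩
  | succ l ih =>
    obtain ⟨l', hl'⟩ := ih
    set j := (σ' ^ l) i with hj
    by_cases hc : (σ' j).castSucc = σ (last (m + 1))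
    · refine ⟨l' + 2, ?_⟩
      have h1 : (σ ^ (l' + 1)) i.castSucc = last (m + 1) := by
        rw [pow_succ', Equiv.Perm.mul_apply, hl', h j, if_pos hc]
      rw [pow_succ', Equiv.Perm.mul_apply, h1, ← hc, pow_succ', Equiv.Perm.mul_apply]
    · refine ⟨l' + 1, ?_⟩
      rw [pow_succ', Equiv.Perm.mul_apply, hl', h j, if_neg hc, pow_succ', Equiv.Perm.mul_apply]

lemma dir2 (h : Splice σ σ') (l : ℕ) (i : Fin (m + 1)) :
    ∃ l', (σ ^ l) i.castSucc = ((σ' ^ l') i).castSucc ∨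
      ((σ ^ l) i.castSucc = last (m + 1) ∧ ((σ' ^ l') i).castSucc = σ (last (m + 1))) := by
  induction l with
  | zero => exact ⟨0, Or.inl rfl⟩
  | succ l ih =>
    obtain ⟨l', hl'⟩ := ih
    rcases hl' with hl' | ⟨hL, ha⟩
    · set j := (σ' ^ l') i with hj
      by_cases hc : (σ' j).castSucc = σ (last (m + 1))
      · refine ⟨l' + 1, Or.inr ⟨?_, ?_⟩⟩
        · rw [pow_succ', Equiv.Perm.mul_apply, hl', h j, if_pos hc]
        · rw [pow_succ', Equiv.Perm.mul_apply, hc]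
      · refine ⟨l' + 1, Or.inl ?_⟩
        rw [pow_succ', Equiv.Perm.mul_apply, hl', h j, if_neg hc, pow_succ', Equiv.Perm.mul_apply]
    · exact ⟨l', Or.inl (by rw [pow_succ', Equiv.Perm.mul_apply, hL, ha])⟩

lemma mem_allMins_castSucc_iff (h : Splice σ σ') (i : Fin (m + 1)) :
    i.castSucc ∈ allMins σ ↔ i ∈ allMins σ' := by
  constructor
  · intro hi l
    obtain ⟨l', hl'⟩ := h.dir1 l i
    have := hi l'
    rw [hl'] at this
    exact Fin.castSucc_le_castSucc_iff.mp this
  · intro hi l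
    obtain ⟨l', hl'⟩ := h.dir2 l i
    rcases hl' with hl' | ⟨hL, _⟩
    · rw [hl']
      exact Fin.castSucc_le_castSucc_iff.mpr (hi l')
    · rw [hL]
      exact Fin.le_last _

lemma last_mem_allMins_iff :
    last (m + 1) ∈ allMins σ ↔ σ (last (m + 1)) = last (m + 1) := by
  constructor
  · intro hm1
    have := hm1 1
    rw [pow_one] at this
    exact le_antisymm (Fin.le_last _) this
  · intro hfix l
    rw [Equiv.Perm.pow_apply_eq_self_of_apply_eq_self hfix]

lemma mem_posMins_castSucc_iff (h : Splice σ σ') (i : Fin (m + 1)) :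
    i.castSucc ∈ posMins σ ↔ i ∈ posMins σ' := by
  have hz : ∀ x : Fin (m + 1), x.castSucc = 0 ↔ x = 0 := fun x => by
    rw [← Fin.castSucc_zero]
    exact ⟨fun e => Fin.castSucc_injective _ e, fun e => by rw [e]⟩
  constructor
  · rintro ⟨h0, hmin⟩
    refine ⟨fun e => h0 (by rw [e, Fin.castSucc_zero]), fun l hl => ?_⟩
    obtain ⟨l', hl'⟩ := h.dir1 l i
    have hne : (σ ^ l') i.castSucc ≠ 0 := by rw [hl']; exact fun e => hl ((hz _).mp e)
    have := hmin l' hne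
    rw [hl'] at this
    exact Fin.castSucc_le_castSucc_iff.mp this
  · rintro ⟨h0, hmin⟩
    refine ⟨fun e => h0 ((hz _).mp e), fun l hl => ?_⟩
    obtain ⟨l', hl'⟩ := h.dir2 l i
    rcases hl' with hl' | ⟨hL, _⟩
    · rw [hl'] at hl ⊢
      exact Fin.castSucc_le_castSucc_iff.mpr
        (hmin l' (fun e => hl (by rw [e, Fin.castSucc_zero])))
    · rw [hL]; exact Fin.le_last _

lemma sameCycle_castSucc_iff (h : Splice σ σ') (i j : Fin (m + 1)) :
    σ.SameCycle i.castSucc j.castSucc ↔ σ'.SameCycle i j := by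
  constructor
  · intro hs
    obtain ⟨l, -, hl⟩ := hs.exists_pow_eq'
    obtain ⟨l', hl'⟩ := h.dir2 l i
    rcases hl' with h2 | ⟨hL, -⟩
    · rw [hl] at h2
      exact ⟨l', by rw [zpow_natCast]; exact Fin.castSucc_injective _ h2.symm⟩
    · rw [hl] at hL; exact absurd hL (Fin.castSucc_lt_last _).ne
  · intro hs
    obtain ⟨l, -, hl⟩ := hs.exists_pow_eq'
    obtain ⟨l', hl'⟩ := h.dir1 l i
    exact ⟨l', by rw [zpow_natCast, hl', hl]⟩

lemma last_ne_zero' : (last (m + 1) : Fin (m + 2)) ≠ 0 := by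
  simp [Fin.ext_iff]

lemma fix_zero_iff (h : Splice σ σ') :
    σ 0 = 0 ↔ (σ' 0 = 0 ∧ σ (last (m + 1)) ≠ 0) := by
  have h0 := h 0
  rw [Fin.castSucc_zero] at h0
  constructor
  · intro hz
    rw [hz] at h0
    by_cases hc : ((σ' 0).castSucc : Fin (m + 2)) = σ (last (m + 1))
    · rw [if_pos hc] at h0
      exact absurd h0.symm last_ne_zero'
    · rw [if_neg hc] at h0
      have hz' : σ' 0 = 0 := by
        rw [← Fin.castSucc_zero] at h0
        exact Fin.castSucc_injective _ h0.symm
      refine ⟨hz', fun e => hc ?_⟩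
      rw [← h0, e]
  · rintro ⟨ha, hb⟩
    rw [ha, Fin.castSucc_zero] at h0
    rw [h0, if_neg (fun e => hb e.symm)]

lemma allMins_decomp_notfix (hsp : Splice σ σ') (hL : σ (last (m + 1)) ≠ last (m + 1)) :
    allMins σ = Fin.castSucc '' allMins σ' := by
  ext x
  rcases Fin.eq_castSucc_or_eq_last x with ⟨i, rfl⟩ | rfl
  · rw [hsp.mem_allMins_castSucc_iff, (Fin.castSucc_injective _).mem_set_image]
  · simp only [last_mem_allMins_iff]
    constructor
    · exact fun e => absurd e hL
    · rintro ⟨j, -, hj⟩; exact absurd hj (Fin.castSucc_lt_last _).ne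
lemma allMins_decomp_fix (hsp : Splice σ σ') (hL : σ (last (m + 1)) = last (m + 1)) :
    allMins σ = insert (last (m + 1)) (Fin.castSucc '' allMins σ') := by
  ext x
  rcases Fin.eq_castSucc_or_eq_last x with ⟨i, rfl⟩ | rfl
  · rw [hsp.mem_allMins_castSucc_iff]
    simp only [Set.mem_insert_iff, (Fin.castSucc_lt_last i).ne, false_or,
      (Fin.castSucc_injective _).mem_set_image]
  · simp only [last_mem_allMins_iff, Set.mem_insert_iff]
    exact ⟨fun _ => Or.inl trivial, fun _ => hL⟩

lemma posMins_decomp_notmem (hsp : Splice σ σ') (hL : last (m + 1) ∉ posMins σ) :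
    posMins σ = Fin.castSucc '' posMins σ' := by
  ext x
  rcases Fin.eq_castSucc_or_eq_last x with ⟨i, rfl⟩ | rfl
  · rw [hsp.mem_posMins_castSucc_iff, (Fin.castSucc_injective _).mem_set_image]
  · constructor
    · exact fun e => absurd e hL
    · rintro ⟨j, -, hj⟩; exact absurd hj (Fin.castSucc_lt_last _).ne

lemma posMins_decomp_mem (hsp : Splice σ σ') (hL : last (m + 1) ∈ posMins σ) :
    posMins σ = insert (last (m + 1)) (Fin.castSucc '' posMins σ') := by
  ext x
  rcases Fin.eq_castSucc_or_eq_last x with ⟨i, rfl⟩ | rfl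
  · rw [hsp.mem_posMins_castSucc_iff]
    simp only [Set.mem_insert_iff, (Fin.castSucc_lt_last i).ne, false_or,
      (Fin.castSucc_injective _).mem_set_image]
  · simp only [Set.mem_insert_iff]
    exact ⟨fun _ => Or.inl trivial, fun _ => hL⟩

end Splice

lemma card_image_castSucc {m : ℕ} (s : Set (Fin (m + 1))) :
    Nat.card (Fin.castSucc '' s : Set (Fin (m + 2))) = Nat.card s := by
  rw [Nat.card_coe_set_eq, Nat.card_coe_set_eq,
    Set.ncard_image_of_injective _ (Fin.castSucc_injective _)]

lemma last_notMem_image_castSucc {m : ℕ} (s : Set (Fin (m + 1))) :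
    last (m + 1) ∉ Fin.castSucc '' s := by
  rintro ⟨j, -, hj⟩; exact absurd hj (Fin.castSucc_lt_last _).ne

lemma card_insert_last {m : ℕ} (s : Set (Fin (m + 1))) :
    Nat.card (insert (last (m + 1)) (Fin.castSucc '' s) : Set (Fin (m + 2))) =
      Nat.card s + 1 := by
  rw [Nat.card_coe_set_eq, Set.ncard_insert_of_notMem (last_notMem_image_castSucc s),
    ← Nat.card_coe_set_eq, card_image_castSucc]

lemma eq_of_image_castSucc_eq {m : ℕ} {A B : Set (Fin (m + 1))}
    (h : Fin.castSucc '' A = Fin.castSucc '' B) : A = B :=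
  Set.image_injective.mpr (Fin.castSucc_injective _) h

lemma eq_of_insert_image_eq {m : ℕ} {A B : Set (Fin (m + 1))}
    (h : insert (last (m + 1)) (Fin.castSucc '' A) =
      insert (last (m + 1)) (Fin.castSucc '' B)) : A = B := by
  ext j
  have hx := Set.ext_iff.mp h j.castSucc
  simp only [Set.mem_insert_iff, (Fin.castSucc_lt_last j).ne, false_or,
    (Fin.castSucc_injective _).mem_set_image] at hx
  exact hx


def Cond (n k : ℕ) (st : Equiv.Perm (Fin (n + 1)) × Equiv.Perm (Fin (n + 1))) : Prop :=
  Nat.card (allMins st.1) = k ∧ st.2 0 = 0 ∧ Nat.card (posMins st.2) = k ∧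
    st.1.SameCycle 0 1 ∧ posMins st.1 = posMins st.2

lemma zero_ne_one_fin {m : ℕ} (hm : 1 ≤ m) : (0 : Fin (m + 1)) ≠ 1 := by
  intro h
  have h2 := congrArg Fin.val h
  rw [Fin.val_zero, Fin.val_one', Nat.mod_eq_of_lt (by omega)] at h2
  omega

lemma castSucc_one_eq {m : ℕ} (hm : 1 ≤ m) : ((1 : Fin (m + 1)).castSucc : Fin (m + 2)) = 1 := by
  apply Fin.ext
  rw [Fin.coe_castSucc, Fin.val_one', Fin.val_one', Nat.mod_eq_of_lt (by omega),
    Nat.mod_eq_of_lt (by omega)]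

lemma castSucc_eq_zero {m : ℕ} {x : Fin (m + 1)} (h : x.castSucc = 0) : x = 0 :=
  Fin.castSucc_injective _ (by rw [h, Fin.castSucc_zero])

lemma last_mem_posMins_of_fix {m : ℕ} {σ : Equiv.Perm (Fin (m + 2))}
    (hfix : σ (last (m + 1)) = last (m + 1)) : last (m + 1) ∈ posMins σ :=
  ⟨Splice.last_ne_zero', fun l _ => by
    rw [Equiv.Perm.pow_apply_eq_self_of_apply_eq_self hfix]⟩

lemma fix_of_last_mem_posMins {m : ℕ} {σ : Equiv.Perm (Fin (m + 2))}
    (h0 : σ 0 = 0) (hL : last (m + 1) ∈ posMins σ) : σ (last (m + 1)) = last (m + 1) := by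
  have hne : σ (last (m + 1)) ≠ 0 := fun e => Splice.last_ne_zero' (σ.injective (e.trans h0.symm))
  have := hL.2 1 (by rwa [pow_one])
  rw [pow_one] at this
  exact le_antisymm (Fin.le_last _) this

lemma last_notMem_posMins_of {m : ℕ} {σ : Equiv.Perm (Fin (m + 2))}
    (hσ0 : σ (last (m + 1)) ≠ 0) (hne : σ (last (m + 1)) ≠ last (m + 1)) :
    last (m + 1) ∉ posMins σ := by
  rintro ⟨-, hmin⟩
  have := hmin 1 (by rwa [pow_one])
  rw [pow_one] at this
  exact hne (le_antisymm (Fin.le_last _) this)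

lemma Splice.last_notMem_posMins {m : ℕ} {σ : Equiv.Perm (Fin (m + 2))}
    {σ' : Equiv.Perm (Fin (m + 1))} (h : Splice σ σ') (hm : 1 ≤ m)
    (hsc : σ'.SameCycle 0 1) (ha : σ (last (m + 1)) ≠ last (m + 1)) :
    last (m + 1) ∉ posMins σ := by
  obtain ⟨a₀, ha₀⟩ : ∃ a₀, σ (last (m + 1)) = castSucc a₀ := by
    rcases Fin.eq_castSucc_or_eq_last (σ (last (m + 1))) with ⟨a₀, h'⟩ | h'
    exacts [⟨a₀, h'⟩, absurd h' ha]
  by_cases h0 : a₀ = 0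
  · have hp0 : σ' 0 ≠ 0 := by
      intro e
      obtain ⟨l, -, hl⟩ := hsc.exists_pow_eq'
      rw [Equiv.Perm.pow_apply_eq_self_of_apply_eq_self e l] at hl
      exact zero_ne_one_fin hm hl
    rintro ⟨-, hmin⟩
    have e1 : σ (last (m + 1)) = (0 : Fin (m + 2)) := by rw [ha₀, h0, Fin.castSucc_zero]
    have e2 : σ (0 : Fin (m + 2)) = (σ' 0).castSucc := by
      have h3 := h 0
      rw [Fin.castSucc_zero] at h3
      rw [h3, if_neg]
      rw [e1]
      intro e
      exact hp0 (castSucc_eq_zero e)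
    have h2 : (σ ^ 2) (last (m + 1)) = (σ' 0).castSucc := by
      calc (σ ^ 2) (last (m + 1)) = σ (σ (last (m + 1))) := by
            rw [pow_succ', pow_one, Equiv.Perm.mul_apply]
        _ = (σ' 0).castSucc := by rw [e1, e2]
    have hne : (σ ^ 2) (last (m + 1)) ≠ 0 := by
      rw [h2]; intro e; exact hp0 (castSucc_eq_zero e)
    have h4 := hmin 2 hne
    rw [h2] at h4
    exact absurd h4 (not_le.mpr (Fin.castSucc_lt_last _))
  · rintro ⟨-, hmin⟩
    have hne : (σ ^ 1) (last (m + 1)) ≠ 0 := by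
      rw [pow_one, ha₀]; intro e; exact h0 (castSucc_eq_zero e)
    have h4 := hmin 1 hne
    rw [pow_one, ha₀] at h4
    exact absurd h4 (not_le.mpr (Fin.castSucc_lt_last _))

lemma cond_iff {m k : ℕ} (hm : 1 ≤ m) (a b : Fin (m + 2)) (p q : Equiv.Perm (Fin (m + 1))) :
    Cond (m + 1) (k + 1) ((dL (m + 1)).symm (a, p), (dL (m + 1)).symm (b, q)) ↔
      ((a = last (m + 1) ∧ b = last (m + 1)) ∧ Cond m k (p, q)) ∨
      ((a ≠ last (m + 1) ∧ (b ≠ last (m + 1) ∧ b ≠ 0)) ∧ Cond m (k + 1) (p, q)) := by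
  dsimp only [Cond]
  set σ := (dL (m + 1)).symm (a, p) with hσdef
  set τ := (dL (m + 1)).symm (b, q) with hτdef
  have hsσ : Splice σ p := splice_dL a p
  have hsτ : Splice τ q := splice_dL b q
  have hσL : σ (last (m + 1)) = a := dL_symm_apply_last a p
  have hτL : τ (last (m + 1)) = b := dL_symm_apply_last b q
  have hsc : σ.SameCycle 0 1 ↔ p.SameCycle 0 1 := by
    have := hsσ.sameCycle_castSucc_iff 0 1
    rwa [Fin.castSucc_zero, castSucc_one_eq hm] at this
  constructor
  · rintro ⟨hA, hT0, hPT, hSC, hPE⟩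
    have hscp : p.SameCycle 0 1 := hsc.mp hSC
    by_cases ha : a = last (m + 1)
    · have hσfix : σ (last (m + 1)) = last (m + 1) := by rw [hσL, ha]
      have hLσ : last (m + 1) ∈ posMins σ := last_mem_posMins_of_fix hσfix
      have hLτ : last (m + 1) ∈ posMins τ := hPE ▸ hLσ
      have hτfix : τ (last (m + 1)) = last (m + 1) := fix_of_last_mem_posMins hT0 hLτ
      have hb : b = last (m + 1) := by rw [← hτL, hτfix]
      refine Or.inl ⟨⟨ha, hb⟩, ?_, ?_, ?_, hscp, ?_⟩
      · have hd := hsσ.allMins_decomp_fix hσfix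
        rw [hd, card_insert_last] at hA
        omega
      · exact ((hsτ.fix_zero_iff).mp hT0).1
      · have hd := hsτ.posMins_decomp_mem hLτ
        rw [hd, card_insert_last] at hPT
        omega
      · have hd1 := hsσ.posMins_decomp_mem hLσ
        have hd2 := hsτ.posMins_decomp_mem hLτ
        rw [hd1, hd2] at hPE
        exact eq_of_insert_image_eq hPE
    · have hσne : σ (last (m + 1)) ≠ last (m + 1) := by rw [hσL]; exact ha
      have hLσ : last (m + 1) ∉ posMins σ := hsσ.last_notMem_posMins hm hscp hσne
      have hLτ : last (m + 1) ∉ posMins τ := hPE ▸ hLσ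
      have hbL : b ≠ last (m + 1) := by
        intro e
        exact hLτ (last_mem_posMins_of_fix (by rw [hτL, e]))
      have hb0 : b ≠ 0 := by
        have := ((hsτ.fix_zero_iff).mp hT0).2
        rwa [hτL] at this
      refine Or.inr ⟨⟨ha, hbL, hb0⟩, ?_, ?_, ?_, hscp, ?_⟩
      · have hd := hsσ.allMins_decomp_notfix hσne
        rw [hd, card_image_castSucc] at hA
        exact hA
      · exact ((hsτ.fix_zero_iff).mp hT0).1
      · have hd := hsτ.posMins_decomp_notmem hLτ
        rw [hd, card_image_castSucc] at hPT
        exact hPT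
      · have hd1 := hsσ.posMins_decomp_notmem hLσ
        have hd2 := hsτ.posMins_decomp_notmem hLτ
        rw [hd1, hd2] at hPE
        exact eq_of_image_castSucc_eq hPE
  · rintro (⟨⟨ha, hb⟩, hA, hq0, hPq, hscp, hPEpq⟩ | ⟨⟨ha, hbL, hb0⟩, hA, hq0, hPq, hscp, hPEpq⟩)
    · have hσfix : σ (last (m + 1)) = last (m + 1) := by rw [hσL, ha]
      have hτfix : τ (last (m + 1)) = last (m + 1) := by rw [hτL, hb]
      have hLσ : last (m + 1) ∈ posMins σ := last_mem_posMins_of_fix hσfix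
      have hLτ : last (m + 1) ∈ posMins τ := last_mem_posMins_of_fix hτfix
      refine ⟨?_, ?_, ?_, hsc.mpr hscp, ?_⟩
      · rw [hsσ.allMins_decomp_fix hσfix, card_insert_last, hA]
      · exact (hsτ.fix_zero_iff).mpr ⟨hq0, by rw [hτL, hb]; exact Splice.last_ne_zero'⟩
      · rw [hsτ.posMins_decomp_mem hLτ, card_insert_last, hPq]
      · rw [hsσ.posMins_decomp_mem hLσ, hsτ.posMins_decomp_mem hLτ, hPEpq]
    · have hσne : σ (last (m + 1)) ≠ last (m + 1) := by rw [hσL]; exact ha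
      have hLσ : last (m + 1) ∉ posMins σ := hsσ.last_notMem_posMins hm hscp hσne
      have hLτ : last (m + 1) ∉ posMins τ :=
        last_notMem_posMins_of (by rw [hτL]; exact hb0) (by rw [hτL]; exact hbL)
      refine ⟨?_, ?_, ?_, hsc.mpr hscp, ?_⟩
      · rw [hsσ.allMins_decomp_notfix hσne, card_image_castSucc, hA]
      · exact (hsτ.fix_zero_iff).mpr ⟨hq0, by rw [hτL]; exact hb0⟩
      · rw [hsτ.posMins_decomp_notmem hLτ, card_image_castSucc, hPq]
      · rw [hsσ.posMins_decomp_notmem hLσ, hsτ.posMins_decomp_notmem hLτ, hPEpq]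

noncomputable def NB (n k : ℕ) : ℕ :=
  Nat.card {st : Equiv.Perm (Fin (n + 1)) × Equiv.Perm (Fin (n + 1)) // Cond n k st}

lemma card_ne_last {m : ℕ} : Nat.card {a : Fin (m + 2) // a ≠ last (m + 1)} = m + 1 := by
  have e : {a : Fin (m + 2) // a ≠ last (m + 1)} ≃ Fin (m + 1) :=
    { toFun := fun x => x.val.castPred x.prop
      invFun := fun i => ⟨i.castSucc, (Fin.castSucc_lt_last i).ne⟩
      left_inv := fun x => Subtype.ext (Fin.castSucc_castPred x.val x.prop)
      right_inv := fun i => Fin.castPred_castSucc (Fin.castSucc_lt_last i).ne }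
  rw [Nat.card_congr e, Nat.card_eq_fintype_card, Fintype.card_fin]

lemma card_ne_last_ne_zero {m : ℕ} :
    Nat.card {b : Fin (m + 2) // b ≠ last (m + 1) ∧ b ≠ 0} = m := by
  have e1 : {b : Fin (m + 2) // b ≠ last (m + 1) ∧ b ≠ 0} ≃ {b' : Fin (m + 1) // b' ≠ 0} :=
    { toFun := fun x => ⟨x.val.castPred x.prop.1, fun e => x.prop.2
        (by rw [← Fin.castSucc_castPred x.val x.prop.1, e, Fin.castSucc_zero])⟩
      invFun := fun y => ⟨y.val.castSucc, (Fin.castSucc_lt_last _).ne,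
        fun e => y.prop (castSucc_eq_zero e)⟩
      left_inv := fun x => Subtype.ext (Fin.castSucc_castPred x.val x.prop.1)
      right_inv := fun y => Subtype.ext (Fin.castPred_castSucc (Fin.castSucc_lt_last _).ne) }
  have e2 : {b' : Fin (m + 1) // b' ≠ 0} ≃ Fin m :=
    { toFun := fun y => y.val.pred y.prop
      invFun := fun i => ⟨i.succ, Fin.succ_ne_zero i⟩
      left_inv := fun y => Subtype.ext (Fin.succ_pred y.val y.prop)
      right_inv := fun i => Fin.pred_succ i }
  rw [Nat.card_congr (e1.trans e2), Nat.card_eq_fintype_card, Fintype.card_fin]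

lemma NB_rec {m k : ℕ} (hm : 1 ≤ m) :
    NB (m + 1) (k + 1) = NB m k + m * (m + 1) * NB m (k + 1) := by
  classical
  set F2 := Fin (m + 2)
  set P1 := Equiv.Perm (Fin (m + 1))
  set L := last (m + 1)
  set A : (F2 × P1) × (F2 × P1) → Prop :=
    fun x => (x.1.1 = L ∧ x.2.1 = L) ∧ Cond m k (x.1.2, x.2.2) with hA
  set B : (F2 × P1) × (F2 × P1) → Prop :=
    fun x => (x.1.1 ≠ L ∧ (x.2.1 ≠ L ∧ x.2.1 ≠ 0)) ∧ Cond m (k + 1) (x.1.2, x.2.2) with hB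
  have e1a : {st : Equiv.Perm F2 × Equiv.Perm F2 // Cond (m + 1) (k + 1) st} ≃
      {x : (F2 × P1) × (F2 × P1) //
        Cond (m + 1) (k + 1) ((dL (m + 1)).symm x.1, (dL (m + 1)).symm x.2)} :=
    Equiv.subtypeEquiv (Equiv.prodCongr (dL (m + 1)) (dL (m + 1))) (fun st => by
      simp)
  have e1b : {x : (F2 × P1) × (F2 × P1) //
        Cond (m + 1) (k + 1) ((dL (m + 1)).symm x.1, (dL (m + 1)).symm x.2)} ≃
      {x : (F2 × P1) × (F2 × P1) // A x ∨ B x} :=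
    Equiv.subtypeEquivRight (fun x => cond_iff hm x.1.1 x.2.1 x.1.2 x.2.2)
  have e1 : {st : Equiv.Perm F2 × Equiv.Perm F2 // Cond (m + 1) (k + 1) st} ≃
      {x : (F2 × P1) × (F2 × P1) // A x ∨ B x} := e1a.trans e1b
  have hdisj : Disjoint A B := by
    rw [disjoint_iff_inf_le]
    rintro x ⟨⟨⟨h1, -⟩, -⟩, ⟨⟨h2, -⟩, -⟩⟩
    exact h2 h1
  have e2 : {x : (F2 × P1) × (F2 × P1) // A x ∨ B x} ≃
      {x // A x} ⊕ {x // B x} := subtypeOrEquiv A B hdisj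
  have e3 : {x : (F2 × P1) × (F2 × P1) // A x} ≃
      {st : P1 × P1 // Cond m k st} :=
    { toFun := fun x => ⟨(x.val.1.2, x.val.2.2), x.prop.2⟩
      invFun := fun st => ⟨((L, st.val.1), (L, st.val.2)), ⟨rfl, rfl⟩, st.prop⟩
      left_inv := fun x => by
        obtain ⟨⟨⟨a1, p1⟩, ⟨a2, p2⟩⟩, ⟨⟨h1, h2⟩, hc⟩⟩ := x
        simp only at h1 h2
        subst h1; subst h2; rfl
      right_inv := fun st => rfl }
  have e4 : {x : (F2 × P1) × (F2 × P1) // B x} ≃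
      {a : F2 // a ≠ L} × {b : F2 // b ≠ L ∧ b ≠ 0} × {st : P1 × P1 // Cond m (k + 1) st} :=
    { toFun := fun x => (⟨x.val.1.1, x.prop.1.1⟩, ⟨x.val.2.1, x.prop.1.2⟩,
        ⟨(x.val.1.2, x.val.2.2), x.prop.2⟩)
      invFun := fun y => ⟨((y.1.val, y.2.2.val.1), (y.2.1.val, y.2.2.val.2)),
        ⟨y.1.prop, y.2.1.prop⟩, y.2.2.prop⟩
      left_inv := fun x => rfl
      right_inv := fun y => rfl }
  have hcard : NB (m + 1) (k + 1) = Nat.card ({x // A x} ⊕ {x // B x}) := by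
    rw [NB, Nat.card_congr (e1.trans e2)]
  rw [hcard, Nat.card_sum, Nat.card_congr e3, Nat.card_congr e4, Nat.card_prod, Nat.card_prod,
    card_ne_last, card_ne_last_ne_zero]
  rw [NB, NB]
  ring

lemma NB_zero (m : ℕ) : NB m 0 = 0 := by
  rw [NB]
  have : IsEmpty {st : Equiv.Perm (Fin (m + 1)) × Equiv.Perm (Fin (m + 1)) // Cond m 0 st} := by
    constructor
    rintro ⟨⟨σ, τ⟩, hc⟩
    have hA : Nat.card (allMins σ) = 0 := hc.1
    have h0 : (0 : Fin (m + 1)) ∈ allMins σ := fun l => Fin.zero_le _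
    have : Nonempty (allMins σ) := ⟨⟨0, h0⟩⟩
    have := Nat.card_pos (α := allMins σ)
    omega
  exact Nat.card_of_isEmpty

lemma allMins_antichain {n : ℕ} {σ : Equiv.Perm (Fin (n + 1))} {x y : Fin (n + 1)}
    (hx : x ∈ allMins σ) (hy : y ∈ allMins σ) (h : σ.SameCycle x y) : x = y := by
  obtain ⟨l, -, hl⟩ := h.exists_pow_eq'
  obtain ⟨l', -, hl'⟩ := h.symm.exists_pow_eq'
  exact le_antisymm (hl ▸ hx l) (hl' ▸ hy l')

lemma posMins_antichain {n : ℕ} {τ : Equiv.Perm (Fin (n + 1))} {x y : Fin (n + 1)}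
    (hx : x ∈ posMins τ) (hy : y ∈ posMins τ) (h : τ.SameCycle x y) : x = y := by
  obtain ⟨l, -, hl⟩ := h.exists_pow_eq'
  obtain ⟨l', -, hl'⟩ := h.symm.exists_pow_eq'
  have h1 := hx.2 l (by rw [hl]; exact hy.1)
  have h2 := hy.2 l' (by rw [hl']; exact hx.1)
  exact le_antisymm (hl ▸ h1) (hl' ▸ h2)

lemma ncard_ne {n : ℕ} (y : Fin (n + 1)) : ({x | x ≠ y} : Set (Fin (n + 1))).ncard = n := by
  have h1 : ({x | x ≠ y} : Set (Fin (n + 1))) = Set.univ \ {y} := by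
    ext x; simp
  rw [h1, Set.ncard_diff (Set.subset_univ _), Set.ncard_univ, Set.ncard_singleton,
    Nat.card_eq_fintype_card, Fintype.card_fin]
  omega

lemma cond_diag_unique {n : ℕ} (hn : 1 ≤ n)
    {st : Equiv.Perm (Fin (n + 1)) × Equiv.Perm (Fin (n + 1))} (h : Cond n n st) :
    st = (Equiv.swap 0 1, 1) := by
  obtain ⟨σ, τ⟩ := st
  have hA : Nat.card (allMins σ) = n := h.1
  have hT0 : τ 0 = 0 := h.2.1
  have hPT : Nat.card (posMins τ) = n := h.2.2.1
  have hSC : σ.SameCycle 0 1 := h.2.2.2.1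
  have hPE : posMins σ = posMins τ := h.2.2.2.2
  have h01 : (0 : Fin (n + 1)) ≠ 1 := zero_ne_one_fin hn
  -- allMins σ = {x | x ≠ 1}
  have h1n : (1 : Fin (n + 1)) ∉ allMins σ := by
    intro hmem
    obtain ⟨l, -, hl⟩ := hSC.symm.exists_pow_eq'
    have h2 := hmem l
    rw [hl] at h2
    exact h01 (le_antisymm (Fin.zero_le 1) h2)
  have hEq : allMins σ = {x | x ≠ 1} := by
    apply Set.eq_of_subset_of_ncard_le
    · intro x hx
      simp only [Set.mem_setOf_eq]
      intro e
      exact h1n (e ▸ hx)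
    · rw [ncard_ne, ← Nat.card_coe_set_eq, hA]
    · exact Set.toFinite _
  have hall : ∀ x : Fin (n + 1), x ≠ 1 → x ∈ allMins σ := fun x hx => by
    rw [hEq]; exact hx
  have h00 : σ 0 ≠ 0 := by
    intro e
    obtain ⟨l, -, hl⟩ := hSC.exists_pow_eq'
    rw [Equiv.Perm.pow_apply_eq_self_of_apply_eq_self e l] at hl
    exact h01 hl
  have hσ0 : σ 0 = 1 := by
    by_contra hne
    exact h00 (allMins_antichain (hall 0 h01) (hall _ hne) ⟨1, by rw [zpow_one]⟩).symm
  have hfix : ∀ x : Fin (n + 1), x ≠ 0 → x ≠ 1 → σ x = x := by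
    intro x hx0 hx1
    rcases eq_or_ne (σ x) 1 with e | e
    · have hc1 : σ.SameCycle x 1 := ⟨1, by rw [zpow_one, e]⟩
      have hc0 : σ.SameCycle x 0 := hc1.trans hSC.symm
      exact absurd (allMins_antichain (hall x hx1) (hall 0 h01) hc0) hx0
    · exact (allMins_antichain (hall x hx1) (hall _ e) ⟨1, by rw [zpow_one]⟩).symm
  have hσ1 : σ 1 = 0 := by
    by_contra hne
    have hne1 : σ 1 ≠ 1 := fun e => h01 (σ.injective (hσ0.trans e.symm))
    exact hne1 (σ.injective (by rw [hfix (σ 1) hne hne1]))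
  have hσ : σ = Equiv.swap 0 1 := by
    apply Equiv.ext
    intro x
    rcases eq_or_ne x 0 with rfl | hx0
    · rw [hσ0, Equiv.swap_apply_left]
    rcases eq_or_ne x 1 with rfl | hx1
    · rw [hσ1, Equiv.swap_apply_right]
    · rw [hfix x hx0 hx1, Equiv.swap_apply_of_ne_of_ne hx0 hx1]
  have hPEq : posMins τ = {x | x ≠ 0} := by
    apply Set.eq_of_subset_of_ncard_le
    · exact fun x hx => hx.1
    · rw [ncard_ne, ← Nat.card_coe_set_eq, hPT]
    · exact Set.toFinite _
  have hallP : ∀ x : Fin (n + 1), x ≠ 0 → x ∈ posMins τ := fun x hx => by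
    rw [hPEq]; exact hx
  have hτ : τ = 1 := by
    apply Equiv.ext
    intro x
    rcases eq_or_ne x 0 with rfl | hx0
    · exact hT0
    · have hx' : τ x ≠ 0 := fun e => hx0 (τ.injective (e.trans hT0.symm))
      exact (posMins_antichain (hallP x hx0) (hallP _ hx') ⟨1, by rw [zpow_one]⟩).symm
  rw [hσ, hτ]

lemma cond_diag_holds {n : ℕ} (hn : 1 ≤ n) :
    Cond n n ((Equiv.swap (0 : Fin (n + 1)) 1), (1 : Equiv.Perm (Fin (n + 1)))) := by
  have h01 : (0 : Fin (n + 1)) ≠ 1 := zero_ne_one_fin hn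
  have hpow : ∀ l : ℕ, ((Equiv.swap (0 : Fin (n + 1)) 1) ^ l) = 1 ∨
      ((Equiv.swap (0 : Fin (n + 1)) 1) ^ l) = Equiv.swap 0 1 := by
    intro l
    induction l with
    | zero => exact Or.inl (pow_zero _)
    | succ l ih =>
      rcases ih with e | e
      · right; rw [pow_succ, e, one_mul]
      · left; rw [pow_succ, e, Equiv.swap_mul_self]
  have happly : ∀ (l : ℕ) (x : Fin (n + 1)),
      ((Equiv.swap (0 : Fin (n + 1)) 1) ^ l) x = x ∨
      ((Equiv.swap (0 : Fin (n + 1)) 1) ^ l) x = Equiv.swap 0 1 x := by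
    intro l x
    rcases hpow l with e | e
    · left; rw [e]; rfl
    · right; rw [e]
  have hAM : allMins (Equiv.swap (0 : Fin (n + 1)) 1) = {x | x ≠ 1} := by
    ext x
    simp only [Set.mem_setOf_eq]
    constructor
    · intro hx e
      subst e
      have h2 := hx 1
      rw [pow_one, Equiv.swap_apply_right] at h2
      exact h01 (le_antisymm (Fin.zero_le _) h2)
    · intro hx l
      rcases happly l x with e | e
      · rw [e]
      · rw [e]
        rcases eq_or_ne x 0 with rfl | hx0
        · rw [Equiv.swap_apply_left]; exact Fin.zero_le 1
        · rw [Equiv.swap_apply_of_ne_of_ne hx0 hx]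
  have hPM : posMins (Equiv.swap (0 : Fin (n + 1)) 1) = {x | x ≠ 0} := by
    ext x
    simp only [Set.mem_setOf_eq]
    constructor
    · exact fun hx => hx.1
    · intro hx
      refine ⟨hx, fun l hl => ?_⟩
      rcases happly l x with e | e
      · rw [e]
      · rw [e] at hl ⊢
        rcases eq_or_ne x 1 with rfl | hx1
        · rw [Equiv.swap_apply_right] at hl ⊢
          exact absurd rfl hl
        · rw [Equiv.swap_apply_of_ne_of_ne hx hx1]
  have hPM1 : posMins (1 : Equiv.Perm (Fin (n + 1))) = {x | x ≠ 0} := by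
    ext x
    simp only [Set.mem_setOf_eq]
    constructor
    · exact fun hx => hx.1
    · exact fun hx => ⟨hx, fun l _ => by rw [one_pow]; exact le_refl _⟩
  refine ⟨?_, rfl, ?_, ⟨1, by rw [zpow_one]; exact Equiv.swap_apply_left 0 1⟩, ?_⟩
  · show Nat.card (allMins (Equiv.swap (0 : Fin (n + 1)) 1)) = n
    rw [hAM, Nat.card_coe_set_eq, ncard_ne]
  · show Nat.card (posMins (1 : Equiv.Perm (Fin (n + 1)))) = n
    rw [hPM1, Nat.card_coe_set_eq, ncard_ne]
  · show posMins (Equiv.swap (0 : Fin (n + 1)) 1) = posMins (1 : Equiv.Perm (Fin (n + 1)))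
    rw [hPM, hPM1]

lemma NB_diag {n : ℕ} (hn : 1 ≤ n) : NB n n = 1 := by
  rw [NB, Nat.card_eq_one_iff_unique]
  refine ⟨⟨fun a b => ?_⟩, ⟨⟨_, cond_diag_holds hn⟩⟩⟩
  apply Subtype.ext
  rw [cond_diag_unique hn a.prop, cond_diag_unique hn b.prop]

lemma lsc_zero : ∀ n : ℕ, 1 ≤ n → lsc n 0 = 0 := fun n hn =>
  match n, hn with
  | _ + 1, _ => rfl

lemma NB_eq_lsc : ∀ n k : ℕ, 1 ≤ k → k ≤ n → NB n k = lsc n k := by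
  intro n
  induction n with
  | zero => intro k h1 h2; omega
  | succ n ih =>
    intro k h1 h2
    rcases eq_or_lt_of_le h2 with rfl | hlt
    · rw [NB_diag (by omega), lsc_diag]
    · obtain ⟨j, rfl⟩ : ∃ j, k = j + 1 := ⟨k - 1, by omega⟩
      have hn1 : 1 ≤ n := by omega
      rw [NB_rec hn1, show lsc (n + 1) (j + 1) = lsc n j + n * (n + 1) * lsc n (j + 1) from rfl,
        ih (j + 1) (by omega) (by omega)]
      congr 1
      rcases Nat.eq_zero_or_pos j with rfl | hj
      · rw [NB_zero, lsc_zero n hn1]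
      · rw [ih j hj (by omega)]


/-- The absolute value of the Legendre-Stirling number of the first kind
`|ls(n,k)| = |js n k (1)|` is the number of ordered pairs `(σ, τ)` where `σ` is a
permutation of `[n]₀ = {0,…,n}` with `k` cycles, `τ` is a permutation of `[n]` with
`k` cycles (modelled as a permutation of `[n]₀` fixing `0`), `1 ∈ Orb_σ(0)` and
`min σ = min τ`. -/
theorem stmt16 (n k : ℕ) (hk : 1 ≤ k) (hkn : k ≤ n) :
    ((js n k).eval 1).natAbs =
      Nat.card {st : Equiv.Perm (Fin (n + 1)) × Equiv.Perm (Fin (n + 1)) //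
        Nat.card (allMins st.1) = k ∧
        st.2 0 = 0 ∧ Nat.card (posMins st.2) = k ∧
        st.1.SameCycle 0 1 ∧
        posMins st.1 = posMins st.2} := by
  have h1 : (js n k).eval 1 = (-1 : ℤ) ^ (n - k) * lsc n k := js_eval n k
  rw [h1, Int.natAbs_mul, Int.natAbs_pow]
  simp only [Int.natAbs_neg, Int.natAbs_one, one_pow, one_mul, Int.natAbs_natCast]
  rw [← NB_eq_lsc n k hk hkn]
  rfl
end
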